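/- arXiv:2003.06328 — 2 statements merged into one kernel-verified Lean document; each statement's English description precedes it below -/
import Mathlib

section
/- Let Y ⊆ 𝒜^ℤ be a subshift and let τ: 𝒜* → ℬ* be a non-erasing morphism. Then there exist a finite alphabet 𝒞, a non-erasing morphism σ: 𝒜* → 𝒞* that is recognizable in Y for aperiodic points, and a map ψ: 𝒞 → ℬ (extended to a letter-to-letter morphism 𝒞* → ℬ*) such that τ = ψ ∘ σ. -/
open Filter Topology
open scoped ENNReal

section Defs

variable {A B C : Type*}

/-- The shift of a two-sided sequence by `k`. -/
def shiftBy (k : ℤ) (x : ℤ → A) : ℤ → A := fun n => x (n + k)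

/-- The finite word `x_m x_{m+1} ⋯ x_{m+len-1}` read in the two-sided sequence `x`. -/
def factorAt (x : ℤ → A) (m : ℤ) (len : ℕ) : List A :=
  (List.range len).map fun i => x (m + (i : ℤ))

/-- Extension of a morphism (given on letters) to finite words. -/
def wordImage (τ : A → List B) (w : List A) : List B := (w.map τ).flatten

/-- Composition of two morphisms. -/
def morphComp (σ : B → List C) (τ : A → List B) : A → List C :=
  fun a => wordImage σ (τ a)

/-- A morphism is non-erasing if no letter is sent to the empty word. -/
def NonErasing (τ : A → List B) : Prop := ∀ a, τ a ≠ []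

/-- A morphism is positive if every target letter occurs in the image of each letter. -/
def PositiveMorph (τ : A → List B) : Prop := ∀ a : A, ∀ b : B, b ∈ τ a

/-- A morphism is proper if all images start with the same letter and end with the same letter. -/
def ProperMorph (τ : A → List B) : Prop :=
  ∃ b b' : B, ∀ a : A, (τ a).head? = some b ∧ (τ a).getLast? = some b'

/-- Cumulative lengths of the images `τ(y_0 ⋯ y_{n-1})` (or the negative part for `n < 0`). -/
def cumLen (τ : A → List B) (y : ℤ → A) (n : ℤ) : ℤ :=
  if 0 ≤ n then ∑ i ∈ Finset.range n.toNat, ((τ (y (i : ℤ))).length : ℤ)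
  else -∑ i ∈ Finset.range (-n).toNat, ((τ (y (-(i : ℤ) - 1))).length : ℤ)

/-- `z` is the two-sided concatenation of the images of the letters of `y` under `τ`,
the image of the 0-th coordinate starting at coordinate 0. -/
def IsSeqImage (τ : A → List B) (y : ℤ → A) (z : ℤ → B) : Prop :=
  ∀ (n : ℤ) (j : Fin (τ (y n)).length), z (cumLen τ y n + ((j : ℕ) : ℤ)) = (τ (y n)).get j

/-- `(k, y)` is a centered `τ`-representation of `x` in `Y`. -/
def IsCenteredRep (τ : A → List B) (Y : Set (ℤ → A)) (x : ℤ → B) (k : ℕ) (y : ℤ → A) : Prop :=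
  y ∈ Y ∧ k < (τ (y 0)).length ∧ ∃ z, IsSeqImage τ y z ∧ x = shiftBy (k : ℤ) z

/-- `τ` is recognizable in `Y`: every point has at most one centered `τ`-representation in `Y`. -/
def RecognizableIn (τ : A → List B) (Y : Set (ℤ → A)) : Prop :=
  ∀ (x : ℤ → B) (k k' : ℕ) (y y' : ℤ → A),
    IsCenteredRep τ Y x k y → IsCenteredRep τ Y x k' y' → k = k' ∧ y = y'

/-- A two-sided sequence is aperiodic for the shift. -/
def AperiodicPoint (x : ℤ → A) : Prop := ∀ k : ℤ, k ≠ 0 → shiftBy k x ≠ x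

/-- `τ` is recognizable in `Y` for aperiodic points. -/
def RecognizableInForAperiodic (τ : A → List B) (Y : Set (ℤ → A)) : Prop :=
  ∀ (x : ℤ → B) (k k' : ℕ) (y y' : ℤ → A), AperiodicPoint x →
    IsCenteredRep τ Y x k y → IsCenteredRep τ Y x k' y' → k = k' ∧ y = y'

/-- A subshift: a closed shift-invariant subset of `A^ℤ`. -/
def IsSubshift [TopologicalSpace A] (X : Set (ℤ → A)) : Prop :=
  IsClosed X ∧ ∀ k : ℤ, ∀ x ∈ X, shiftBy k x ∈ X

/-- A minimal subshift: nonempty and every orbit is dense in it. -/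
def MinimalSubshift [TopologicalSpace A] (X : Set (ℤ → A)) : Prop :=
  IsSubshift X ∧ X.Nonempty ∧ ∀ x ∈ X, X ⊆ closure {z | ∃ k : ℤ, z = shiftBy k x}

/-- `X` is the smallest subshift containing `τ(Y)`. -/
def IsSmallestSubshiftContaining [TopologicalSpace B] (τ : A → List B)
    (Y : Set (ℤ → A)) (X : Set (ℤ → B)) : Prop :=
  IsSubshift X ∧ (∀ y ∈ Y, ∀ z, IsSeqImage τ y z → z ∈ X) ∧
    ∀ X' : Set (ℤ → B), IsSubshift X' → (∀ y ∈ Y, ∀ z, IsSeqImage τ y z → z ∈ X') → X ⊆ X'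

/-- The language of a subshift. -/
def langOf (X : Set (ℤ → A)) : Set (List A) :=
  {w | ∃ x ∈ X, ∃ m : ℤ, factorAt x m w.length = w}

/-- The complexity function of a subshift. -/
noncomputable def complexity (X : Set (ℤ → A)) (n : ℕ) : ℕ :=
  Set.ncard {w : List A | w.length = n ∧ w ∈ langOf X}

/-- `‖τ‖`, the maximal length of the image of a letter. -/
noncomputable def normSup (τ : A → List B) : ℕ := sSup (Set.range fun a => (τ a).length)

/-- `⟨τ⟩`, the minimal length of the image of a letter. -/
noncomputable def normInf (τ : A → List B) : ℕ := sInf (Set.range fun a => (τ a).length)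

/-- The language of `θ(A^ℤ)`: finite words occurring in two-sided images under `θ`. -/
def morphLang (θ : A → List C) : Set (List C) :=
  {w | ∃ (x : ℤ → A) (z : ℤ → C) (m : ℤ), IsSeqImage θ x z ∧ factorAt z m w.length = w}

/-- `p_{θ(A^ℤ)}(n)`: number of words of length `n` occurring in two-sided images under `θ`. -/
noncomputable def morphComplexity (θ : A → List C) (n : ℕ) : ℕ :=
  Set.ncard {w : List C | w.length = n ∧ w ∈ morphLang θ}

/-- The set `F(b, n, σ, L)` of right extensions of `b` in `L`. -/
def Fset (σ : B → List C) (b : B) (n : ℕ) (L : Set (List B)) : Set (List B) :=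
  {w | w ∈ L ∧ (b :: w) ∈ L ∧ w.head? ≠ some b ∧
    (wordImage σ w.dropLast).length < n ∧ n ≤ (wordImage σ w).length}

/-- `τ(A^i)`: images under `τ` of words of length `i`. -/
def imagesOfLen (τ : A → List B) (i : ℕ) : Set (List B) :=
  {w | ∃ u : List A, u.length = i ∧ wordImage τ u = w}

/-- `Comp_i(σ|τ)(n)`, the `i`-th complexity of `σ` with respect to `τ`. -/
noncomputable def relCompI [Fintype B] (σ : B → List C) (τ : A → List B) (i n : ℕ) : ℕ :=
  ∑ b : B, (Fset σ b n (imagesOfLen τ i)).ncard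

/-- `Comp(σ|τ)(n)`, the complexity of `σ` with respect to `τ`. -/
noncomputable def relComp [Fintype B] (σ : B → List C) (τ : A → List B) (n : ℕ) : ℕ :=
  ∑ b : B, (Fset σ b n (morphLang τ)).ncard

/-- Number of maximal blocks of a single repeated letter in a word. -/
def blockCount [DecidableEq B] : List B → ℕ
  | [] => 0
  | [_] => 1
  | a :: b :: l => (if a = b then 0 else 1) + blockCount (b :: l)

/-- The repetition complexity `r-comp(τ)` of a morphism. -/
noncomputable def rcomp [Fintype A] [DecidableEq B] (τ : A → List B) : ℕ :=
  ∑ a : A, blockCount (τ a)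

/-- Two two-sided sequences are left asymptotic. -/
def LeftAsymptotic (x y : ℤ → A) : Prop :=
  ∃ N : ℕ, ∀ k : ℕ, N ≤ k → x (-(k : ℤ)) = y (-(k : ℤ))

/-- The shift orbits of `x` and `y` are asymptotic. -/
def OrbitsAsymptotic (x y : ℤ → A) : Prop :=
  ∃ k k' : ℤ, LeftAsymptotic (shiftBy k x) (shiftBy k' y)

/-- A finite set `W` of non-empty words is recognizable in the subshift `X`. -/
def WordSetRecognizable [TopologicalSpace B] (W : Set (List B)) (X : Set (ℤ → B)) : Prop :=
  ∃ (A' : Type) (_ : Fintype A') (Y : Set (ℤ → A')) (τ : A' → List B),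
    Set.range τ = W ∧ NonErasing τ ∧ (@IsSubshift A' ⊥ Y) ∧
    IsSmallestSubshiftContaining τ Y X ∧ RecognizableIn τ Y

end Defs

section Seq

variable {A : ℕ → Type*}

/-- `τ_{[0,n]} = τ_0 ∘ τ_1 ∘ ⋯ ∘ τ_n`. -/
def compSeq (τ : ∀ n, A (n+1) → List (A n)) : ∀ n, A (n+1) → List (A 0)
  | 0 => τ 0
  | n+1 => fun a => wordImage (compSeq τ n) (τ (n+1) a)

/-- `τ_{[n, n+k]} = τ_n ∘ ⋯ ∘ τ_{n+k}`. -/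
def compFrom (τ : ∀ n, A (n+1) → List (A n)) (n : ℕ) : ∀ k, A (n+k+1) → List (A n)
  | 0 => τ n
  | k+1 => fun a => wordImage (compFrom τ n k) (τ (n+k+1) a)

/-- The S-adic subshift generated by the directive sequence `τ`. -/
def sadicSubshift (τ : ∀ n, A (n+1) → List (A n)) : Set (ℤ → A 0) :=
  {x | ∀ (m : ℤ) (len : ℕ), ∃ (n : ℕ) (a : A (n+1)), factorAt x m len <:+: compSeq τ n a}

/-- The level-`n` subshift `X_τ^{(n)}` of the directive sequence `τ`. -/
def levelSubshift (τ : ∀ n, A (n+1) → List (A n)) (n : ℕ) : Set (ℤ → A n) :=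
  {x | ∀ (m : ℤ) (len : ℕ), ∃ (k : ℕ) (a : A (n+k+1)), factorAt x m len <:+: compFrom τ n k a}

end Seq

/-!
Donoso's trick: let `σ` send `a` to the word `(a,0)(a,1)⋯(a,|τ(a)|-1)` and let `ψ(a,i) = τ(a)_i`.
Each letter of `σ(y)` names the letter of `y` whose image contains it and its offset in that image,
so a point of the form `S^k σ(y)` determines `k` (the offset of its `0`-th letter) and then `y`,
block by block in both directions. Hence `σ` is recognizable in every `Y`, periodic points included.
-/

section Marking

variable {A B : Type*}

theorem cumLen_zero (τ : A → List B) (y : ℤ → A) : cumLen τ y 0 = 0 := by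
  simp [cumLen]

theorem cumLen_succ (τ : A → List B) (y : ℤ → A) (n : ℤ) :
    cumLen τ y (n + 1) = cumLen τ y n + (τ (y n)).length := by
  unfold cumLen
  rcases le_or_gt 0 n with hn | hn
  · rw [if_pos hn, if_pos (by omega), show (n + 1).toNat = n.toNat + 1 by omega,
      Finset.sum_range_succ, Int.toNat_of_nonneg hn]
  · rw [if_neg (show ¬ 0 ≤ n by omega)]
    rcases eq_or_lt_of_le (show n + 1 ≤ 0 by omega) with h0 | h0
    · obtain rfl : n = -1 := by omega
      simp
    · rw [if_neg (show ¬ 0 ≤ n + 1 by omega), show (-n).toNat = (-(n + 1)).toNat + 1 by omega,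
        Finset.sum_range_succ, show -(((-(n + 1)).toNat : ℤ)) - 1 = n by omega]
      ring

abbrev MarkedAlphabet (τ : A → List B) : Type _ := Σ a : A, Fin (τ a).length

def markMorph (τ : A → List B) (a : A) : List (MarkedAlphabet τ) :=
  List.ofFn fun i : Fin (τ a).length => ⟨a, i⟩

def markProj (τ : A → List B) (c : MarkedAlphabet τ) : B := (τ c.1).get c.2

@[simp]
theorem length_markMorph (τ : A → List B) (a : A) : (markMorph τ a).length = (τ a).length := by
  simp [markMorph]

theorem map_markProj_markMorph (τ : A → List B) (a : A) :
    (markMorph τ a).map (markProj τ) = τ a := by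
  simp only [markMorph, List.map_ofFn]
  exact List.ofFn_get (τ a)

theorem nonErasing_markMorph {τ : A → List B} (hτ : NonErasing τ) : NonErasing (markMorph τ) :=
  fun a h => hτ a (List.length_eq_zero_iff.mp (by simpa using congrArg List.length h))

theorem cumLen_markMorph (τ : A → List B) (y : ℤ → A) :
    cumLen (markMorph τ) y = cumLen τ y := by
  funext n
  simp [cumLen]

theorem IsSeqImage.markMorph_apply {τ : A → List B} {y : ℤ → A} {z : ℤ → MarkedAlphabet τ}
    (hz : IsSeqImage (markMorph τ) y z) (n : ℤ) (j : ℕ) (hj : j < (τ (y n)).length) :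
    z (cumLen τ y n + j) = ⟨y n, ⟨j, hj⟩⟩ := by
  simpa [cumLen_markMorph, markMorph, List.get_ofFn] using
    hz n ⟨j, by rwa [length_markMorph]⟩

variable {τ : A → List B} {y y' : ℤ → A} {z : ℤ → MarkedAlphabet τ}

theorem IsSeqImage.eq_of_cumLen_eq (hτ : NonErasing τ) (hz : IsSeqImage (markMorph τ) y z)
    (hz' : IsSeqImage (markMorph τ) y' z) {n : ℤ} (hn : cumLen τ y n = cumLen τ y' n) :
    y n = y' n := by
  have h := hz.markMorph_apply n 0 (List.length_pos_iff.mpr (hτ (y n)))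
  rw [hn, hz'.markMorph_apply n 0 (List.length_pos_iff.mpr (hτ (y' n)))] at h
  exact (congrArg Sigma.fst h).symm

/-- The last letter of the `n`-th block is read just before the cut point `cumLen τ y (n + 1)`. -/
theorem IsSeqImage.eq_of_cumLen_succ_eq (hτ : NonErasing τ) (hz : IsSeqImage (markMorph τ) y z)
    (hz' : IsSeqImage (markMorph τ) y' z) {n : ℤ}
    (hn : cumLen τ y (n + 1) = cumLen τ y' (n + 1)) : y n = y' n := by
  have hpos := List.length_pos_iff.mpr (hτ (y n))
  have hpos' := List.length_pos_iff.mpr (hτ (y' n))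
  have h := hz.markMorph_apply n _ (Nat.sub_lt hpos one_pos)
  have h' := hz'.markMorph_apply n _ (Nat.sub_lt hpos' one_pos)
  rw [cumLen_succ, cumLen_succ] at hn
  rw [show cumLen τ y n + ((τ (y n)).length - 1 : ℕ) =
      cumLen τ y' n + ((τ (y' n)).length - 1 : ℕ) by omega, h'] at h
  exact (congrArg Sigma.fst h).symm

theorem IsSeqImage.eq_of_markMorph (hτ : NonErasing τ) (hz : IsSeqImage (markMorph τ) y z)
    (hz' : IsSeqImage (markMorph τ) y' z) : y = y' := by
  have hcut : ∀ n, cumLen τ y n = cumLen τ y' n := by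
    intro n
    induction n using Int.induction_on with
    | zero => rw [cumLen_zero, cumLen_zero]
    | succ i ih => rw [cumLen_succ, cumLen_succ, ih, hz.eq_of_cumLen_eq hτ hz' ih]
    | pred i ih =>
      have hi : -(i : ℤ) - 1 + 1 = -i := by ring
      have hy := hz.eq_of_cumLen_succ_eq hτ hz' (n := -(i : ℤ) - 1) (by rwa [hi])
      have hs := cumLen_succ τ y (-(i : ℤ) - 1)
      have hs' := cumLen_succ τ y' (-(i : ℤ) - 1)
      rw [hi] at hs hs'
      rw [← hy] at hs'
      omega
  exact funext fun n => hz.eq_of_cumLen_eq hτ hz' (hcut n)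

theorem recognizableIn_markMorph (hτ : NonErasing τ) (Y : Set (ℤ → A)) :
    RecognizableIn (markMorph τ) Y := by
  rintro x k k' y y' ⟨-, hk, z, hz, rfl⟩ ⟨-, hk', z', hz', hx⟩
  rw [length_markMorph] at hk hk'
  have hzz' : ∀ m : ℤ, z (m + k) = z' (m + k') := fun m => congrFun hx m
  have hzk : z k = ⟨y 0, ⟨k, hk⟩⟩ := by simpa [cumLen_zero] using hz.markMorph_apply 0 k hk
  have hzk' : z' k' = ⟨y' 0, ⟨k', hk'⟩⟩ := by
    simpa [cumLen_zero] using hz'.markMorph_apply 0 k' hk'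
  have h0 := hzz' 0
  rw [zero_add, zero_add, hzk, hzk'] at h0
  obtain rfl : k = k' := by simpa using congrArg (fun c : MarkedAlphabet τ => (c.2 : ℕ)) h0
  have hz_eq : z = z' := funext fun m => by simpa using hzz' (m - k)
  subst hz_eq
  exact ⟨rfl, hz.eq_of_markMorph hτ hz'⟩

end Marking

theorem RecognizableIn.recognizableInForAperiodic {A C : Type*} {σ : A → List C}
    {Y : Set (ℤ → A)} (h : RecognizableIn σ Y) : RecognizableInForAperiodic σ Y :=
  fun x k k' y y' _ => h x k k' y y'

theorem stmt5_general {A B : Type} [Fintype A]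
    (Y : Set (ℤ → A))
    (τ : A → List B) (hτ : NonErasing τ) :
    ∃ (C : Type) (_ : Fintype C) (σ : A → List C) (ψ : C → B),
      NonErasing σ ∧ RecognizableInForAperiodic σ Y ∧ ∀ a : A, τ a = (σ a).map ψ :=
  ⟨MarkedAlphabet τ, inferInstance, markMorph τ, markProj τ, nonErasing_markMorph hτ,
    (recognizableIn_markMorph hτ Y).recognizableInForAperiodic,
    fun a => (map_markProj_markMorph τ a).symm⟩

/-- every non-erasing morphism factors as a letter-to-letter morphism composed
with a morphism recognizable for aperiodic points (Lemma `lem:DonosoTrick`). -/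
theorem stmt5 {A B : Type} [Fintype A] [Fintype B]
    [TopologicalSpace A] [DiscreteTopology A]
    (Y : Set (ℤ → A)) (hY : IsSubshift Y)
    (τ : A → List B) (hτ : NonErasing τ) :
    ∃ (C : Type) (_ : Fintype C) (σ : A → List C) (ψ : C → B),
      NonErasing σ ∧ RecognizableInForAperiodic σ Y ∧ ∀ a : A, τ a = (σ a).map ψ :=
  stmt5_general Y τ hτ
end

section
/- Let (X,S) be the S-adic subshift generated by a positive directive sequence τ = (τ_n: 𝒜_{n+1}* → 𝒜_n*)_{n≥0}. If liminf_{n→∞} |𝒜_n| ≤ 2, then the complexity of X is sub-quadratic along a subsequence: liminf_{n→∞} p_X(n)/n² = 0. -/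
open Filter Topology
open scoped ENNReal

/-!
At a level `P + 1` where the alphabet has at most two letters, every word of the language is a
factor of an image under `θ = τ_{[0,P]}`. Let `θ b₀` be the shorter and `θ b₁` the longer of the
two images, of lengths `m ≤ M`. A factor of length `M` lies in some `θ (x b₀ʲ y)` with
`j m < M`, since it cannot strictly contain a `θ b₁`, and is determined by `x`, `y`, `j` and its
starting position (less than `2 M`), so `p_X(M) ≤ 16 M² / m`. By positivity `m → ∞` along such levels, unless all
the words `τ_{[0,n)}(a)` have bounded length, in which case the language is finite.
-/

section Words

variable {B C D : Type*}

@[simp] lemma wordImage_nil (θ : B → List C) : wordImage θ [] = [] := rfl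

@[simp] lemma wordImage_cons (θ : B → List C) (b : B) (u : List B) :
    wordImage θ (b :: u) = θ b ++ wordImage θ u := by
  simp [wordImage]

@[simp] lemma wordImage_append (θ : B → List C) (u v : List B) :
    wordImage θ (u ++ v) = wordImage θ u ++ wordImage θ v := by
  simp [wordImage]

@[simp] lemma length_wordImage_replicate (θ : B → List C) (j : ℕ) (b : B) :
    (wordImage θ (List.replicate j b)).length = j * (θ b).length := by
  simp [wordImage]

lemma wordImage_wordImage (σ : C → List D) (ρ : B → List C) (u : List B) :
    wordImage σ (wordImage ρ u) = wordImage (fun b => wordImage σ (ρ b)) u := by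
  induction u with
  | nil => rfl
  | cons b u ih => simp [ih]

lemma infix_wordImage_of_mem (θ : B → List C) {b : B} {u : List B} (h : b ∈ u) :
    θ b <:+: wordImage θ u := by
  obtain ⟨s, t, rfl⟩ := List.append_of_mem h
  exact ⟨wordImage θ s, wordImage θ t, by simp⟩

lemma NonErasing.wordImage {θ : B → List C} (hθ : NonErasing θ) {u : List B} (hu : u ≠ []) :
    _root_.wordImage θ u ≠ [] := by
  obtain ⟨b, u, rfl⟩ := List.exists_cons_of_ne_nil hu
  simp [hθ b]

lemma List.infix_of_append_eq_append_left {p w t a r : List C} (h : p ++ w ++ t = a ++ r)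
    (ha : a.length ≤ p.length) : w <:+: r := by
  have := congrArg (List.drop a.length) h
  rw [List.append_assoc, List.drop_append_of_le_length ha, List.drop_left] at this
  exact ⟨p.drop a.length, t, by rw [List.append_assoc, this]⟩

lemma List.infix_of_append_eq_append_right {p w t a r : List C} (h : p ++ w ++ t = r ++ a)
    (ha : a.length ≤ t.length) : w <:+: r := by
  have h' : t.reverse ++ w.reverse ++ p.reverse = a.reverse ++ r.reverse := by
    simpa using congrArg List.reverse h
  exact List.reverse_infix.mp (List.infix_of_append_eq_append_left h' (by simpa using ha))

lemma List.IsInfix.exists_eq_take_drop {w W : List C} (h : w <:+: W) :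
    ∃ i, i + w.length ≤ W.length ∧ (W.drop i).take w.length = w := by
  obtain ⟨p, t, rfl⟩ := h
  exact ⟨p.length, by simp, by simp⟩

-- Trim `u` at both ends for as long as `w` remains a factor of its image.
theorem exists_cons_infix_wordImage_of_infix (θ : B → List C) {w : List C} (hw : w ≠ []) :
    ∀ u : List B, w <:+: wordImage θ u →
      ∃ b s, w <:+: wordImage θ (b :: s) ∧ (wordImage θ s.dropLast).length < w.length
  | [], h => absurd (List.infix_nil.mp h) hw
  | b :: s, h => by
    by_cases hlt : (wordImage θ s.dropLast).length < w.length
    · exact ⟨b, s, h, hlt⟩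
    obtain ⟨p, t, hpt⟩ := h
    rcases s.eq_nil_or_concat' with rfl | ⟨s, c, rfl⟩
    · simp [List.length_pos_iff.mpr hw] at hlt
    rw [List.dropLast_concat, not_lt] at hlt
    rcases le_or_gt (θ b).length p.length with hp | hp
    · exact exists_cons_infix_wordImage_of_infix θ hw (s ++ [c])
        (List.infix_of_append_eq_append_left (hpt.trans (wordImage_cons θ b _)) hp)
    rcases le_or_gt (θ c).length t.length with ht | ht
    · refine exists_cons_infix_wordImage_of_infix θ hw (b :: s)
        (List.infix_of_append_eq_append_right (p := p) ?_ ht)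
      simpa using hpt
    · have := congrArg List.length hpt
      simp only [List.append_assoc, List.length_append, wordImage_cons, wordImage_append,
        wordImage_nil, List.append_nil] at this
      omega
termination_by u => u.length

section TwoLetters

variable (θ : B → List C) {b₀ b₁ : B}

theorem exists_eq_take_drop_wordImage (hθ : NonErasing θ) (hcov : ∀ b, b = b₀ ∨ b = b₁)
    (hle : (θ b₀).length ≤ (θ b₁).length) {w : List C} (hwlen : w.length = (θ b₁).length)
    {u : List B} (hw : w <:+: wordImage θ u) :
    ∃ x y : B, ∃ j i : ℕ, j * (θ b₀).length < (θ b₁).length ∧ i < 2 * (θ b₁).length ∧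
      w = ((wordImage θ (x :: (List.replicate j b₀ ++ [y]))).drop i).take (θ b₁).length := by
  have hwne : w ≠ [] := by simpa [← List.length_pos_iff, hwlen] using hθ b₁
  obtain ⟨x, s, hws, hlt⟩ := exists_cons_infix_wordImage_of_infix θ hwne u hw
  have hlen : ∀ b, (θ b).length ≤ (θ b₁).length := fun b => by
    rcases hcov b with rfl | rfl <;> omega
  obtain ⟨y, j, hj, hwW⟩ : ∃ y j, j * (θ b₀).length < (θ b₁).length ∧
      w <:+: wordImage θ (x :: (List.replicate j b₀ ++ [y])) := by
    rcases s.eq_nil_or_concat' with rfl | ⟨s, y, rfl⟩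
    · refine ⟨b₀, 0, by simpa using List.length_pos_iff.mpr (hθ b₁), hws.trans ?_⟩
      exact ⟨[], θ b₀, by simp⟩
    rw [List.dropLast_concat, hwlen] at hlt
    have hs : s = List.replicate s.length b₀ := List.eq_replicate_length.mpr fun c hc => by
      refine (hcov c).resolve_right ?_
      rintro rfl
      exact absurd (infix_wordImage_of_mem θ hc).length_le (not_le.mpr hlt)
    refine ⟨y, s.length, ?_, hs ▸ hws⟩
    rwa [hs, length_wordImage_replicate] at hlt
  obtain ⟨i, hi, hwi⟩ := hwW.exists_eq_take_drop
  refine ⟨x, y, j, i, hj, ?_, hwlen ▸ hwi.symm⟩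
  simp only [wordImage_cons, wordImage_append, wordImage_nil, List.append_nil,
    List.length_append, length_wordImage_replicate] at hi
  have := hlen x
  have := hlen y
  omega

theorem ncard_mul_le_of_forall_infix (hθ : NonErasing θ) (hcov : ∀ b, b = b₀ ∨ b = b₁)
    (hle : (θ b₀).length ≤ (θ b₁).length) {S : Set (List C)}
    (hS : ∀ w ∈ S, w.length = (θ b₁).length ∧ ∃ u, w <:+: wordImage θ u) :
    S.ncard * (θ b₀).length ≤ 16 * (θ b₁).length ^ 2 := by
  classical
  set m := (θ b₀).length
  set M := (θ b₁).length
  have hm : 0 < m := List.length_pos_iff.mpr (hθ b₀)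
  let F : Finset (List C) :=
    (({b₀, b₁} ×ˢ {b₀, b₁} ×ˢ Finset.range (M / m + 1) ×ˢ Finset.range (2 * M)).image
      fun q : B × B × ℕ × ℕ =>
        ((wordImage θ (q.1 :: (List.replicate q.2.2.1 b₀ ++ [q.2.1]))).drop q.2.2.2).take M)
  have hSF : S ⊆ F := by
    intro w hw
    obtain ⟨hwlen, u, hwu⟩ := hS w hw
    obtain ⟨x, y, j, i, hj, hi, rfl⟩ :=
      exists_eq_take_drop_wordImage θ hθ hcov hle hwlen hwu
    have hjm : j ≤ M / m := (Nat.le_div_iff_mul_le hm).mpr hj.le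
    simp only [F, Finset.coe_image, Set.mem_image, Finset.mem_coe, Finset.mem_product,
      Finset.mem_range, Finset.mem_insert, Finset.mem_singleton]
    exact ⟨(x, y, j, i), ⟨hcov x, hcov y, Nat.lt_succ_of_le hjm, hi⟩, rfl⟩
  have hF : F.card ≤ 2 * (2 * ((M / m + 1) * (2 * M))) := by
    refine Finset.card_image_le.trans ?_
    simp only [Finset.card_product, Finset.card_range]
    gcongr <;> exact Finset.card_le_two
  have hdiv : (M / m + 1) * m ≤ 2 * M := by
    have := Nat.div_mul_le_self M m
    nlinarith
  calc S.ncard * m ≤ F.card * m := by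
        gcongr
        simpa using Set.ncard_le_ncard hSF F.finite_toSet
    _ ≤ 2 * (2 * ((M / m + 1) * (2 * M))) * m := by gcongr
    _ = 8 * M * ((M / m + 1) * m) := by ring
    _ ≤ 8 * M * (2 * M) := by gcongr
    _ = 16 * M ^ 2 := by ring

end TwoLetters

end Words

lemma exists_forall_eq_or_eq_of_card_le_two {B : Type*} [Fintype B] [Nonempty B]
    (h : Fintype.card B ≤ 2) : ∃ b₀ b₁ : B, ∀ b, b = b₀ ∨ b = b₁ := by
  have : 0 < Fintype.card B := Fintype.card_pos
  interval_cases hB : Fintype.card B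
  · obtain ⟨x, hx⟩ := Fintype.card_eq_one_iff.mp hB
    exact ⟨x, x, fun b => Or.inl (hx b)⟩
  · obtain ⟨x, y, -, hxy⟩ := Nat.card_eq_two_iff.mp (Nat.card_eq_fintype_card.trans hB)
    exact ⟨x, y, fun b => by simpa using (Set.ext_iff.mp hxy b).mpr trivial⟩

lemma ENNReal.natCast_div_sq_le_of_mul_le {p m M c : ℕ} (hm : m ≠ 0) (h : p * m ≤ c * M ^ 2) :
    (p : ℝ≥0∞) / (M : ℝ≥0∞) ^ 2 ≤ (c : ℝ≥0∞) / m := by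
  refine ENNReal.div_le_of_le_mul ?_
  rw [div_eq_mul_inv, mul_right_comm, ← div_eq_mul_inv,
    ENNReal.le_div_iff_mul_le (Or.inl (by exact_mod_cast hm)) (Or.inl (ENNReal.natCast_ne_top m))]
  exact_mod_cast h

lemma liminf_complexity_div_sq_eq_zero_of_forall_length_le {A₀ : Type*} (X : Set (ℤ → A₀))
    (b : ℕ) (hb : ∀ w ∈ langOf X, w.length ≤ b) :
    liminf (fun n : ℕ => (complexity X n : ℝ≥0∞) / (n : ℝ≥0∞) ^ 2) atTop = 0 := by
  refine le_antisymm (liminf_le_of_frequently_le ?_) bot_le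
  refine (eventually_atTop.mpr ⟨b + 1, fun n hn => ?_⟩).frequently
  have : {w : List A₀ | w.length = n ∧ w ∈ langOf X} = ∅ :=
    Set.eq_empty_of_forall_notMem fun w ⟨hwn, hw⟩ => by have := hb w hw; omega
  simp [complexity, this]

section Directive

variable {A : ℕ → Type*} (τ : ∀ n, A (n+1) → List (A n))

lemma compSeq_succ (n : ℕ) (a : A (n+2)) :
    compSeq τ (n+1) a = wordImage (compSeq τ n) (τ (n+1) a) := rfl

lemma nonErasing_compSeq (hne : ∀ n, NonErasing (τ n)) (n : ℕ) : NonErasing (compSeq τ n) := by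
  induction n with
  | zero => exact hne 0
  | succ n ih => exact fun a => ih.wordImage (hne (n+1) a)

lemma isEmpty_of_le (hne : ∀ n, NonErasing (τ n)) {k n : ℕ} (hkn : k ≤ n) [IsEmpty (A k)] :
    IsEmpty (A n) := by
  induction n, hkn using Nat.le_induction with
  | base => infer_instance
  | succ n _ ih =>
    refine ⟨fun a => ?_⟩
    obtain ⟨c, -⟩ := List.exists_mem_of_ne_nil _ (hne n a)
    exact IsEmpty.false c

lemma infix_compSeq_of_lt (hne : ∀ n, NonErasing (τ n)) (hpos : ∀ n, 1 ≤ n → PositiveMorph (τ n))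
    {n P : ℕ} (hnP : n < P) (a : A (n+1)) (c : A (P+1)) :
    compSeq τ n a <:+: compSeq τ P c := by
  induction P, hnP using Nat.le_induction with
  | base => exact infix_wordImage_of_mem _ (hpos (n+1) (Nat.le_add_left 1 n) c a)
  | succ P _ ih =>
    obtain ⟨d, hd⟩ := List.exists_mem_of_ne_nil _ (hne (P+1) c)
    exact (ih d).trans (infix_wordImage_of_mem _ hd)

lemma exists_compSeq_eq_wordImage {P n : ℕ} (hPn : P < n) (a : A (n+1)) :
    ∃ u : List (A (P+1)), compSeq τ n a = wordImage (compSeq τ P) u := by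
  induction n, hPn using Nat.le_induction with
  | base => exact ⟨τ (P+1) a, rfl⟩
  | succ n _ ih =>
    choose f hf using ih
    refine ⟨wordImage f (τ (n+1) a), ?_⟩
    rw [compSeq_succ, wordImage_wordImage, ← funext hf]

lemma exists_infix_compSeq_of_mem_langOf {w : List (A 0)} (hw : w ∈ langOf (sadicSubshift τ)) :
    ∃ (n : ℕ) (a : A (n+1)), w <:+: compSeq τ n a := by
  obtain ⟨x, hx, m, hxw⟩ := hw
  exact hxw ▸ hx m w.length

lemma exists_infix_wordImage_compSeq_of_mem_langOf (hne : ∀ n, NonErasing (τ n))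
    (hpos : ∀ n, 1 ≤ n → PositiveMorph (τ n)) (hA : ∀ n, Nonempty (A n)) (P : ℕ)
    {w : List (A 0)} (hw : w ∈ langOf (sadicSubshift τ)) :
    ∃ u : List (A (P+1)), w <:+: wordImage (compSeq τ P) u := by
  obtain ⟨n, a, hwa⟩ := exists_infix_compSeq_of_mem_langOf τ hw
  obtain ⟨c⟩ := hA (max n P + 2)
  obtain ⟨u, hu⟩ := exists_compSeq_eq_wordImage τ (Nat.lt_succ_of_le (le_max_right n P)) c
  exact ⟨u, hu ▸ hwa.trans (infix_compSeq_of_lt τ hne hpos (by omega) a c)⟩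

theorem exists_complexity_mul_le (hne : ∀ n, NonErasing (τ n))
    (hpos : ∀ n, 1 ≤ n → PositiveMorph (τ n)) (hA : ∀ n, Nonempty (A n)) (P : ℕ)
    [Fintype (A (P+1))] (hcard : Fintype.card (A (P+1)) ≤ 2) :
    ∃ b₀ b₁ : A (P+1), (compSeq τ P b₀).length ≤ (compSeq τ P b₁).length ∧
      complexity (sadicSubshift τ) (compSeq τ P b₁).length * (compSeq τ P b₀).length ≤
        16 * (compSeq τ P b₁).length ^ 2 := by
  have := hA (P+1)
  obtain ⟨c₀, c₁, hcov⟩ := exists_forall_eq_or_eq_of_card_le_two hcard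
  wlog hle : (compSeq τ P c₀).length ≤ (compSeq τ P c₁).length generalizing c₀ c₁
  · exact this c₁ c₀ (fun b => (hcov b).symm) (le_of_not_ge hle)
  refine ⟨c₀, c₁, hle, ncard_mul_le_of_forall_infix _ (nonErasing_compSeq τ hne P) hcov hle ?_⟩
  exact fun w ⟨hwlen, hw⟩ =>
    ⟨hwlen, exists_infix_wordImage_compSeq_of_mem_langOf τ hne hpos hA P hw⟩

lemma exists_forall_length_compSeq_le_of_isEmpty (hne : ∀ n, NonErasing (τ n))
    [∀ n, Fintype (A n)] (k : ℕ) [IsEmpty (A k)] :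
    ∃ b, ∀ n (a : A (n+1)), (compSeq τ n a).length ≤ b := by
  refine ⟨∑ n ∈ Finset.range k, ∑ a : A (n+1), (compSeq τ n a).length, fun n a => ?_⟩
  have hn : n < k := by
    by_contra! hkn
    exact (isEmpty_of_le τ hne (Nat.le_succ_of_le hkn)).false a
  calc (compSeq τ n a).length ≤ ∑ a : A (n+1), (compSeq τ n a).length :=
        Finset.single_le_sum (f := fun a => (compSeq τ n a).length)
          (fun _ _ => Nat.zero_le _) (Finset.mem_univ a)
    _ ≤ _ := Finset.single_le_sum (f := fun n => ∑ a : A (n+1), (compSeq τ n a).length)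
        (fun _ _ => Nat.zero_le _) (Finset.mem_range.mpr hn)

theorem liminf_complexity_div_sq_le [∀ n, Fintype (A n)] (hne : ∀ n, NonErasing (τ n))
    (hpos : ∀ n, 1 ≤ n → PositiveMorph (τ n)) (hA : ∀ n, Nonempty (A n))
    (hcard : ∃ᶠ n in atTop, Fintype.card (A n) ≤ 2)
    (hlong : ∀ b, ∃ (n : ℕ) (a : A (n+1)), b < (compSeq τ n a).length) (b : ℕ) :
    liminf (fun n : ℕ => (complexity (sadicSubshift τ) n : ℝ≥0∞) / (n : ℝ≥0∞) ^ 2) atTop ≤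
      16 / b := by
  refine liminf_le_of_frequently_le (frequently_atTop.mpr fun K => ?_)
  obtain ⟨n, a, hna⟩ := hlong (max b K)
  obtain ⟨_ | P, hP, hcardP⟩ := frequently_atTop.mp hcard (n + 2)
  · omega
  obtain ⟨b₀, b₁, hle, hcount⟩ := exists_complexity_mul_le τ hne hpos hA P hcardP
  have hb₀ := (infix_compSeq_of_lt τ hne hpos (by omega : n < P) a b₀).length_le
  refine ⟨_, by omega, (ENNReal.natCast_div_sq_le_of_mul_le (by omega) hcount).trans ?_⟩
  exact ENNReal.div_le_div_left (by exact_mod_cast (by omega : b ≤ (compSeq τ P b₀).length)) _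

end Directive

/-- an S-adic subshift of alphabet rank at most 2 has sub-quadratic complexity
along a subsequence (Corollary `cor:SadicNonSuperQuadra`). -/
theorem stmt13 {A : ℕ → Type} [∀ n, Fintype (A n)]
    (τ : ∀ n, A (n+1) → List (A n)) (hne : ∀ n, NonErasing (τ n))
    (hpos : ∀ n, 1 ≤ n → PositiveMorph (τ n))
    (h : Filter.liminf (fun n => ((Fintype.card (A n) : ℕ∞))) Filter.atTop ≤ 2) :
    Filter.liminf
      (fun n : ℕ => (complexity (sadicSubshift τ) n : ℝ≥0∞) / ((n : ℝ≥0∞) ^ 2))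
      Filter.atTop = 0 := by
  by_cases hbdd : ∃ b, ∀ n (a : A (n+1)), (compSeq τ n a).length ≤ b
  · obtain ⟨b, hb⟩ := hbdd
    refine liminf_complexity_div_sq_eq_zero_of_forall_length_le _ b fun w hw => ?_
    obtain ⟨n, a, hwa⟩ := exists_infix_compSeq_of_mem_langOf τ hw
    exact hwa.length_le.trans (hb n a)
  push Not at hbdd
  have hA : ∀ n, Nonempty (A n) := fun k => by
    by_contra hk
    have := not_nonempty_iff.mp hk
    obtain ⟨b, hb⟩ := exists_forall_length_compSeq_le_of_isEmpty τ hne k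
    obtain ⟨n, a, hna⟩ := hbdd b
    exact (hb n a).not_gt hna
  have hcard : ∃ᶠ n in atTop, Fintype.card (A n) ≤ 2 :=
    (frequently_lt_of_liminf_lt (by isBoundedDefault)
      (h.trans_lt (by decide : (2 : ℕ∞) < 3))).mono
      fun n hn => Nat.le_of_lt_succ (by exact_mod_cast hn)
  have hlim : Tendsto (fun b : ℕ => (16 : ℝ≥0∞) / b) atTop (𝓝 0) := by
    simpa using ENNReal.Tendsto.const_div ENNReal.tendsto_nat_nhds_top (Or.inr ENNReal.ofNat_ne_top)
  exact le_antisymm (ge_of_tendsto' hlim (liminf_complexity_div_sq_le τ hne hpos hA hcard hbdd))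
    bot_le
end
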